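/- For x ≥ 1, ψ'(x) - 1/x < 1/(2x²) + 1/(6x³) - 1/(30x⁵) + 1/(42x⁷), where ψ' is the trigamma function. -/

import Mathlib

open Real Filter Topology Set

/-!
Convexity of `log Γ` (Bohr–Mollerup) gives `log x ≤ ψ(x + 1) ≤ log (x + 1)`, hence
`ψ(x) = lim (log (x + N) - ∑_{k<N} 1/(x + k))`. The derivatives of these approximants converge
locally uniformly, so `ψ'(x) = ∑ 1/(x + k)²`. The right-hand side of the bound plus `1/x` is a
function `M` with `M y - M (y + 1) > 1/y²` for `y > 0` and `M → 0`, so the series telescopes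
to `ψ'(x) < M x`.
-/

noncomputable def digamma (x : ℝ) : ℝ := deriv Real.Gamma x / Real.Gamma x

noncomputable def trigamma (x : ℝ) : ℝ := deriv digamma x

lemma hasDerivAt_log_Gamma {x : ℝ} (hx : 0 < x) :
    HasDerivAt (fun y => log (Gamma y)) (digamma x) x :=
  (differentiableAt_Gamma fun m => ((neg_nonpos.2 m.cast_nonneg).trans_lt hx).ne').hasDerivAt.log
    (Gamma_pos_of_pos hx).ne'

lemma digamma_add_one {x : ℝ} (hx : 0 < x) : digamma (x + 1) = digamma x + 1 / x := by
  have hshift : HasDerivAt (fun y => log (Gamma (y + 1))) (digamma (x + 1)) x :=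
    (hasDerivAt_log_Gamma (by linarith)).comp_add_const x 1
  have hrec : (fun y => log (Gamma y) + log y) =ᶠ[𝓝 x] fun y => log (Gamma (y + 1)) := by
    filter_upwards [eventually_gt_nhds hx] with y hy
    rw [Gamma_add_one hy.ne', log_mul hy.ne' (Gamma_pos_of_pos hy).ne', add_comm]
  rw [one_div]
  exact (((hasDerivAt_log_Gamma hx).add (hasDerivAt_log hx.ne')).congr_of_eventuallyEq
    hrec.symm).unique hshift |>.symm

lemma digamma_add_nat {x : ℝ} (hx : 0 < x) (N : ℕ) :
    digamma (x + N) = digamma x + ∑ k ∈ Finset.range N, 1 / (x + k) := by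
  induction N with
  | zero => simp
  | succ n ih =>
    rw [Nat.cast_succ, ← add_assoc, digamma_add_one (by positivity), ih, Finset.sum_range_succ,
      add_assoc]

lemma log_le_digamma_add_one {x : ℝ} (hx : 0 < x) : log x ≤ digamma (x + 1) := by
  have hd : HasDerivAt (log ∘ Gamma) (digamma (x + 1)) (x + 1) :=
    hasDerivAt_log_Gamma (by linarith)
  have h := convexOn_log_Gamma.slope_le_deriv (mem_Ioi.2 hx) (mem_Ioi.2 (by linarith))
    (by linarith) hd.differentiableAt
  rwa [hd.deriv, slope_def_field, add_sub_cancel_left, div_one, Function.comp_apply,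
    Function.comp_apply, Gamma_add_one hx.ne', log_mul hx.ne' (Gamma_pos_of_pos hx).ne',
    add_sub_cancel_right] at h

lemma digamma_add_one_le_log_add_one {x : ℝ} (hx : 0 < x) :
    digamma (x + 1) ≤ log (x + 1) := by
  have hx1 : 0 < x + 1 := by linarith
  have hd : HasDerivAt (log ∘ Gamma) (digamma (x + 1)) (x + 1) := hasDerivAt_log_Gamma hx1
  have h := convexOn_log_Gamma.deriv_le_slope (mem_Ioi.2 hx1)
    (mem_Ioi.2 (by linarith : 0 < x + 1 + 1)) (by linarith) hd.differentiableAt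
  rwa [hd.deriv, slope_def_field, add_sub_cancel_left, div_one, Function.comp_apply,
    Function.comp_apply, Gamma_add_one hx1.ne', log_mul hx1.ne' (Gamma_pos_of_pos hx1).ne',
    add_sub_cancel_right] at h

lemma tendsto_log_sub_digamma_add_nat {x : ℝ} (hx : 0 < x) :
    Tendsto (fun N : ℕ => log (x + N + 1) - digamma (x + N + 1)) atTop (𝓝 0) := by
  have hbound : Tendsto (fun N : ℕ => 1 / (x + N)) atTop (𝓝 0) :=
    tendsto_const_nhds.div_atTop (tendsto_atTop_add_const_left _ x tendsto_natCast_atTop_atTop)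
  refine squeeze_zero (fun N => ?_) (fun N => ?_) hbound
  · linarith [digamma_add_one_le_log_add_one (by positivity : 0 < x + N)]
  · have hy : 0 < x + N := by positivity
    have hlog : log (x + N + 1) - log (x + N) ≤ 1 / (x + N) := by
      rw [← log_div (by positivity) hy.ne']
      linarith [log_le_sub_one_of_pos (by positivity : 0 < (x + N + 1) / (x + N)),
        show (x + N + 1) / (x + N) - 1 = 1 / (x + N) by field_simp; ring]
    linarith [log_le_digamma_add_one hy]

lemma tendsto_log_sub_sum_inv {x : ℝ} (hx : 0 < x) :
    Tendsto (fun N : ℕ => log (x + N) - ∑ k ∈ Finset.range N, 1 / (x + k)) atTop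
      (𝓝 (digamma x)) := by
  rw [← tendsto_add_atTop_iff_nat 1]
  convert (tendsto_log_sub_digamma_add_nat hx).add_const (digamma x) using 2 with N
  · have h := digamma_add_nat hx (N + 1)
    rw [Nat.cast_add_one, ← add_assoc] at h ⊢
    linarith
  · rw [zero_add]

lemma hasDerivAt_log_sub_sum_inv (N : ℕ) {y : ℝ} (hy : 0 < y) :
    HasDerivAt (fun z => log (z + N) - ∑ k ∈ Finset.range N, 1 / (z + k))
      (1 / (y + N) + ∑ k ∈ Finset.range N, 1 / (y + k) ^ 2) y := by
  have hlog : HasDerivAt (fun z => log (z + N)) (1 / (y + N)) y := by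
    simpa using ((hasDerivAt_id y).add_const (N : ℝ)).log (by positivity)
  have hinv (k : ℕ) : HasDerivAt (fun z : ℝ => 1 / (z + k)) (-(1 / (y + k) ^ 2)) y := by
    simpa [one_div, neg_div] using ((hasDerivAt_id y).add_const (k : ℝ)).fun_inv (by positivity)
  simpa [Finset.sum_neg_distrib, sub_neg_eq_add] using
    hlog.fun_sub (HasDerivAt.fun_sum fun k _ => hinv k)

lemma summable_one_div_add_nat_sq {a : ℝ} (ha : 0 < a) :
    Summable fun n : ℕ => 1 / (a + n) ^ 2 := by
  have h := (Real.summable_one_div_nat_add_rpow a 2).2 one_lt_two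
  refine h.congr fun n => ?_
  rw [abs_of_pos (by positivity), add_comm, ← Real.rpow_natCast]
  norm_num

lemma tendstoUniformlyOn_one_div_add_nat :
    TendstoUniformlyOn (fun (N : ℕ) (y : ℝ) => 1 / (y + N)) 0 atTop (Ici 0) := by
  rw [Metric.tendstoUniformlyOn_iff]
  intro ε hε
  filter_upwards [tendsto_one_div_atTop_nhds_zero_nat.eventually (gt_mem_nhds hε),
    eventually_gt_atTop 0] with N hN hN0 y (hy : 0 ≤ y)
  have hN0' : (0 : ℝ) < N := by exact_mod_cast hN0
  rw [Pi.zero_apply, dist_zero_left, Real.norm_of_nonneg (by positivity)]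
  exact (one_div_le_one_div_of_le hN0' (by linarith)).trans_lt hN

lemma tendstoUniformlyOn_sum_one_div_add_nat_sq {a : ℝ} (ha : 0 < a) :
    TendstoUniformlyOn (fun (N : ℕ) (y : ℝ) => ∑ k ∈ Finset.range N, 1 / (y + k) ^ 2)
      (fun y => ∑' k : ℕ, 1 / (y + k) ^ 2) atTop (Ici a) := by
  refine tendstoUniformlyOn_tsum_nat (summable_one_div_add_nat_sq ha) fun k y (hy : a ≤ y) => ?_
  rw [Real.norm_of_nonneg (by positivity)]
  gcongr

theorem hasDerivAt_digamma {x : ℝ} (hx : 0 < x) :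
    HasDerivAt digamma (∑' k : ℕ, 1 / (x + k) ^ 2) x := by
  have ha : 0 < x / 2 := half_pos hx
  have hunif : TendstoUniformlyOn
      (fun (N : ℕ) (y : ℝ) => 1 / (y + N) + ∑ k ∈ Finset.range N, 1 / (y + k) ^ 2)
      (fun y => ∑' k : ℕ, 1 / (y + k) ^ 2) atTop (Ioi (x / 2)) := by
    refine (((tendstoUniformlyOn_one_div_add_nat.mono (Ici_subset_Ici.2 ha.le)).add
      (tendstoUniformlyOn_sum_one_div_add_nat_sq ha)).mono Ioi_subset_Ici_self).congr_right ?_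
    exact fun y _ => zero_add _
  exact hasDerivAt_of_tendstoUniformlyOn isOpen_Ioi hunif
    (Eventually.of_forall fun N y hy => hasDerivAt_log_sub_sum_inv N (ha.trans hy))
    (fun y hy => tendsto_log_sub_sum_inv (ha.trans hy)) (half_lt_self hx)

theorem trigamma_eq_tsum {x : ℝ} (hx : 0 < x) : trigamma x = ∑' k : ℕ, 1 / (x + k) ^ 2 :=
  (hasDerivAt_digamma hx).deriv

lemma tsum_lt_of_lt_sub_succ {f u : ℕ → ℝ} (hf : ∀ n, 0 ≤ f n)
    (hfu : ∀ n, f n < u n - u (n + 1)) (hu : Tendsto u atTop (𝓝 0)) : ∑' n, f n < u 0 := by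
  have hg : HasSum (fun n => u n - u (n + 1)) (u 0) := by
    rw [hasSum_iff_tendsto_nat_of_nonneg fun n => (hf n).trans (hfu n).le]
    simp only [Finset.sum_range_sub']
    simpa using tendsto_const_nhds.sub hu
  have hfs : Summable f := hg.summable.of_nonneg_of_le hf fun n => (hfu n).le
  exact hasSum_lt (fun n => (hfu n).le) (hfu 0) hfs.hasSum hg

/-- The asymptotic expansion `ψ'(y) ~ 1/y + 1/(2y²) + ∑ B₂ₖ / y^(2k+1)`,
truncated after `B₆`. -/
noncomputable def trigammaMajorant (y : ℝ) : ℝ :=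
  1 / y + 1 / (2 * y ^ 2) + 1 / (6 * y ^ 3) - 1 / (30 * y ^ 5) + 1 / (42 * y ^ 7)

lemma one_div_sq_lt_trigammaMajorant_sub {y : ℝ} (hy : 0 < y) :
    1 / y ^ 2 < trigammaMajorant y - trigammaMajorant (y + 1) := by
  have hdiff : trigammaMajorant y - trigammaMajorant (y + 1) - 1 / y ^ 2
      = (63 * y ^ 4 + 126 * y ^ 3 + 98 * y ^ 2 + 35 * y + 5) / (210 * y ^ 7 * (y + 1) ^ 7) := by
    unfold trigammaMajorant
    field_simp
    ring
  have hpos : 0 < (63 * y ^ 4 + 126 * y ^ 3 + 98 * y ^ 2 + 35 * y + 5)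
      / (210 * y ^ 7 * (y + 1) ^ 7) := by
    positivity
  linarith

lemma tendsto_trigammaMajorant_atTop : Tendsto trigammaMajorant atTop (𝓝 0) := by
  have hterm (c : ℝ) (k : ℕ) (hk : k ≠ 0) :
      Tendsto (fun y : ℝ => 1 / (c * y ^ k)) atTop (𝓝 0) := by
    simpa [mul_comm c, ← div_div] using (tendsto_pow_neg_atTop hk).div_const c
  unfold trigammaMajorant
  simpa using ((((hterm 1 1 one_ne_zero).add (hterm 2 2 two_ne_zero)).add
    (hterm 6 3 three_ne_zero)).sub (hterm 30 5 (by norm_num))).add (hterm 42 7 (by norm_num))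

theorem trigamma_upper (x : ℝ) (hx : 1 ≤ x) :
    trigamma x - 1 / x <
      1 / (2 * x ^ 2) + 1 / (6 * x ^ 3) - 1 / (30 * x ^ 5) + 1 / (42 * x ^ 7) := by
  have hx0 : 0 < x := by linarith
  have hlt := tsum_lt_of_lt_sub_succ (f := fun n : ℕ => 1 / (x + n) ^ 2)
    (u := fun n : ℕ => trigammaMajorant (x + n)) (fun n => by positivity)
    (fun n => by
      simpa [add_assoc] using one_div_sq_lt_trigammaMajorant_sub (by positivity : 0 < x + n))
    (tendsto_trigammaMajorant_atTop.comp
      (tendsto_atTop_add_const_left _ x tendsto_natCast_atTop_atTop))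
  rw [Nat.cast_zero, add_zero, ← trigamma_eq_tsum hx0] at hlt
  unfold trigammaMajorant at hlt
  linarith
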